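/- For a kernel with a = c and |b| < a, the D_K distance between two extended intervals A and B depends only on the differences of midpoints and ranges: D_K(A,B)² = ((a+b)/2)(r_A − r_B)² + 2(a−b)(m_A − m_B)², where m_X = (X_L + X_R)/2 and r_X = X_R − X_L; consequently D_K(A,B) = 0 if and only if A and B have the same midpoint and the same range (i.e., A = B). -/
import Mathlib


/-- Squared `D_K` norm with `K(1,1) = K(-1,-1) = a`, `K(1,-1) = K(-1,1) = b`. -/
def normSqK (a b : ℝ) (Y : ℝ × ℝ) : ℝ :=
  a * Y.2^2 + a * Y.1^2 - 2 * b * Y.2 * Y.1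

theorem statement_19 (a b : ℝ) (hb : |b| < a) (A B : ℝ × ℝ) :
    normSqK a b (A.1 - B.1, A.2 - B.2)
      = ((a + b) / 2) * ((A.2 - A.1) - (B.2 - B.1))^2
        + 2 * (a - b) * ((A.1 + A.2) / 2 - (B.1 + B.2) / 2)^2 ∧
    (normSqK a b (A.1 - B.1, A.2 - B.2) = 0 ↔ A = B) := by
  obtain ⟨h1, h2⟩ := abs_lt.mp hb
  have hab1 : 0 < (a + b) / 2 := by linarith
  have hab2 : 0 < a - b := by linarith
  have key : normSqK a b (A.1 - B.1, A.2 - B.2)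
      = ((a + b) / 2) * ((A.2 - A.1) - (B.2 - B.1))^2
        + 2 * (a - b) * ((A.1 + A.2) / 2 - (B.1 + B.2) / 2)^2 := by
    simp only [normSqK]; ring
  refine ⟨key, ?_, fun h => by subst h; simp [normSqK]⟩
  intro h0
  rw [key] at h0
  have t1 : 0 ≤ ((a + b) / 2) * ((A.2 - A.1) - (B.2 - B.1))^2 := by positivity
  have t2 : 0 ≤ 2 * (a - b) * ((A.1 + A.2) / 2 - (B.1 + B.2) / 2)^2 := by positivity
  have e1 : ((A.2 - A.1) - (B.2 - B.1))^2 = 0 := by nlinarith [sq_nonneg ((A.2 - A.1) - (B.2 - B.1)), sq_nonneg ((A.1 + A.2) / 2 - (B.1 + B.2) / 2)]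
  have e2 : ((A.1 + A.2) / 2 - (B.1 + B.2) / 2)^2 = 0 := by nlinarith [sq_nonneg ((A.2 - A.1) - (B.2 - B.1)), sq_nonneg ((A.1 + A.2) / 2 - (B.1 + B.2) / 2)]
  have e1' := pow_eq_zero_iff (n := 2) (by norm_num) |>.mp e1
  have e2' := pow_eq_zero_iff (n := 2) (by norm_num) |>.mp e2
  have : A.1 = B.1 := by linarith
  have : A.2 = B.2 := by linarith
  exact Prod.ext ‹A.1 = B.1› ‹A.2 = B.2›
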